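/- arXiv:1405.5997 — 4 statements merged into one kernel-verified Lean document; each statement's English description precedes it below -/
import Mathlib

section
/- For every real ρ > 0 and every integer K ≥ 1, there exists a unique two-choice profile for (ρ, K); that is, there is exactly one vector (v_0, v_1, …, v_K) ∈ ℝ^{K+1} with 1 = v_0 ≥ v_1 ≥ … ≥ v_K ≥ 0 satisfying, with the convention v_{K+1} = 0, v_k − v_{k+1} = ρ(v_{k−1}² − v_k²) for every 1 ≤ k ≤ K. -/
open Finset Real

noncomputable section

/-- Extend a vector `v = (v_0, …, v_K) ∈ ℝ^{K+1}` to `ℕ → ℝ` by zero,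
implementing the convention `v_{K+1} = 0`. -/
def extProfile (K : ℕ) (v : Fin (K + 1) → ℝ) : ℕ → ℝ :=
  fun k => if h : k < K + 1 then v ⟨k, h⟩ else 0

/-- `v = (v_0, …, v_K)` is a two-choice profile for `(ρ, K)`:
`1 = v_0 ≥ v_1 ≥ … ≥ v_K ≥ 0` and, with the convention `v_{K+1} = 0`,
`v_k − v_{k+1} = ρ (v_{k−1}² − v_k²)` for every `1 ≤ k ≤ K`. -/
def IsTwoChoiceProfile (ρ : ℝ) (K : ℕ) (v : Fin (K + 1) → ℝ) : Prop :=
  extProfile K v 0 = 1 ∧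
  (∀ k < K, extProfile K v (k + 1) ≤ extProfile K v k) ∧
  0 ≤ extProfile K v K ∧
  ∀ k, 1 ≤ k → k ≤ K →
    extProfile K v k - extProfile K v (k + 1) =
      ρ * ((extProfile K v (k - 1)) ^ 2 - (extProfile K v k) ^ 2)

/-- When it exists, the unique two-choice profile for `(ρ, K)`, denoted `ν_{ρ,K}`. -/
def nu (ρ : ℝ) (K : ℕ) : Fin (K + 1) → ℝ :=
  Classical.epsilon (IsTwoChoiceProfile ρ K)

/-- `ν_{ρ,K}` viewed as a function on `ℕ` (with `ν_{ρ,K}(K+1) = 0`). -/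
def nuV (ρ : ℝ) (K : ℕ) : ℕ → ℝ := extProfile K (nu ρ K)

/-- `P(ρ, K) = (1 − ν_{ρ,K}(1)) + ν_{ρ,K}(K)`, the limiting proportion of
problematic (empty or full) queues. -/
def propProblematic (ρ : ℝ) (K : ℕ) : ℝ := (1 - nuV ρ K 1) + nuV ρ K K

/-!
Summing the balance equations from `k` to `K` (with `v_{K+1} = 0`) telescopes them to
`v_{k-1}² = v_K² + v_k / ρ`. So, read backwards as `u n = v_{K+1-n}`, a profile is determined by
its last entry `t = v_K` through `u 0 = 0`, `u (n+1) = √(t² + u n / ρ)`. The value `u (K+1)` is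
continuous and strictly increasing in `t ≥ 0`, equal to `0` at `t = 0` and at least `1` at `t = 1`,
so exactly one `t` gives `v_0 = 1`.
-/

def backProfile (ρ t : ℝ) : ℕ → ℝ
  | 0 => 0
  | n + 1 => √(t ^ 2 + backProfile ρ t n / ρ)

section BackProfile

variable {ρ t : ℝ}

lemma backProfile_nonneg (ρ t : ℝ) : ∀ n, 0 ≤ backProfile ρ t n
  | 0 => le_rfl
  | _ + 1 => Real.sqrt_nonneg _

lemma backProfile_succ_sq (hρ : 0 ≤ ρ) (n : ℕ) :
    backProfile ρ t (n + 1) ^ 2 = t ^ 2 + backProfile ρ t n / ρ :=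
  Real.sq_sqrt (by have := backProfile_nonneg ρ t n; positivity)

lemma monotone_backProfile (hρ : 0 ≤ ρ) : Monotone (backProfile ρ t) := by
  refine monotone_nat_of_le_succ fun n => ?_
  induction n with
  | zero => exact backProfile_nonneg ρ t 1
  | succ n ih => exact Real.sqrt_le_sqrt (by gcongr)

lemma backProfile_le_backProfile (hρ : 0 ≤ ρ) {t' : ℝ} (ht : 0 ≤ t) (htt' : t ≤ t') :
    ∀ n, backProfile ρ t n ≤ backProfile ρ t' n
  | 0 => le_rfl
  | n + 1 => Real.sqrt_le_sqrt <| add_le_add (by gcongr)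
      (div_le_div_of_nonneg_right (backProfile_le_backProfile hρ ht htt' n) hρ)

lemma strictMonoOn_backProfile_succ (hρ : 0 ≤ ρ) (n : ℕ) :
    StrictMonoOn (fun t => backProfile ρ t (n + 1)) (Set.Ici 0) := by
  intro t ht t' _ htt'
  have hsq : t ^ 2 < t' ^ 2 := by gcongr
  have hle := backProfile_le_backProfile hρ ht htt'.le n
  exact Real.sqrt_lt_sqrt (by have := backProfile_nonneg ρ t n; positivity)
    (add_lt_add_of_lt_of_le hsq (div_le_div_of_nonneg_right hle hρ))

lemma continuous_backProfile (ρ : ℝ) (n : ℕ) : Continuous fun t => backProfile ρ t n := by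
  induction n with
  | zero => exact continuous_const
  | succ n ih => exact ((continuous_pow 2).add (ih.div_const ρ)).sqrt

lemma existsUnique_backProfile_succ_eq_one (hρ : 0 ≤ ρ) (n : ℕ) :
    ∃! t, 0 ≤ t ∧ backProfile ρ t (n + 1) = 1 := by
  have hzero : ∀ m, backProfile ρ 0 m = 0 := by
    intro m
    induction m with
    | zero => rfl
    | succ m ih => simp [backProfile, ih]
  have hone : 1 ≤ backProfile ρ 1 (n + 1) := by
    calc (1 : ℝ) = backProfile ρ 1 1 := by simp [backProfile]
      _ ≤ backProfile ρ 1 (n + 1) := monotone_backProfile hρ (by omega)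
  obtain ⟨t, ht, hvt⟩ := intermediate_value_Icc zero_le_one
    (continuous_backProfile ρ (n + 1)).continuousOn ⟨(hzero _).trans_le zero_le_one, hone⟩
  exact ⟨t, ⟨ht.1, hvt⟩, fun s hs =>
    (strictMonoOn_backProfile_succ hρ n).injOn hs.1 ht.1 (hs.2.trans hvt.symm)⟩

end BackProfile

section Profile

variable {ρ t : ℝ} {K : ℕ} {v : Fin (K + 1) → ℝ}

lemma extProfile_of_lt {k : ℕ} (hk : k < K + 1) : extProfile K v k = v ⟨k, hk⟩ :=
  dif_pos hk

lemma extProfile_of_le {k : ℕ} (hk : K + 1 ≤ k) : extProfile K v k = 0 :=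
  dif_neg hk.not_gt

def profileFromLast (ρ t : ℝ) (K : ℕ) : Fin (K + 1) → ℝ :=
  fun k => backProfile ρ t (K + 1 - k)

lemma extProfile_profileFromLast {k : ℕ} (hk : k ≤ K + 1) :
    extProfile K (profileFromLast ρ t K) k = backProfile ρ t (K + 1 - k) := by
  rcases hk.lt_or_eq with hk | rfl
  · exact extProfile_of_lt hk
  · simp [extProfile_of_le, backProfile]

lemma isTwoChoiceProfile_profileFromLast (hρ : 0 < ρ) (h : backProfile ρ t (K + 1) = 1) :
    IsTwoChoiceProfile ρ K (profileFromLast ρ t K) := by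
  simp only [IsTwoChoiceProfile]
  refine ⟨?_, fun k hk => ?_, ?_, fun k hk hkK => ?_⟩
  · simpa [extProfile_profileFromLast] using h
  · rw [extProfile_profileFromLast (by omega), extProfile_profileFromLast (by omega)]
    exact monotone_backProfile hρ.le (by omega)
  · rw [extProfile_profileFromLast (by omega)]
    exact backProfile_nonneg ρ t _
  · obtain ⟨n, rfl⟩ : ∃ n, K = k + n := ⟨K - k, by omega⟩
    rw [extProfile_profileFromLast (by omega), extProfile_profileFromLast (by omega),
      extProfile_profileFromLast (by omega), show k + n + 1 - (k - 1) = n + 1 + 1 by omega,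
      show k + n + 1 - k = n + 1 by omega, show k + n + 1 - (k + 1) = n by omega,
      backProfile_succ_sq hρ.le, backProfile_succ_sq hρ.le]
    field_simp
    ring

namespace IsTwoChoiceProfile

lemma extProfile_nonneg (hv : IsTwoChoiceProfile ρ K v) (k : ℕ) : 0 ≤ extProfile K v k := by
  obtain ⟨-, hmono, hlast, -⟩ := hv
  rcases le_or_gt k K with hk | hk
  · induction hk using Nat.decreasingInduction with
    | self => exact hlast
    | of_succ k hk ih => exact ih.trans (hmono k hk)
  · exact (extProfile_of_le hk).ge

lemma extProfile_sq (hρ : ρ ≠ 0) (hv : IsTwoChoiceProfile ρ K v) {k : ℕ} (hk : k ≤ K) :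
    extProfile K v k ^ 2 = extProfile K v K ^ 2 + extProfile K v (k + 1) / ρ := by
  induction hk using Nat.decreasingInduction with
  | self => simp [extProfile_of_le]
  | of_succ k hk ih =>
    have hbalance := hv.2.2.2 (k + 1) (by omega) hk
    rw [Nat.add_sub_cancel] at hbalance
    rw [ih, mul_sub, mul_add, mul_div_cancel₀ _ hρ] at hbalance
    field_simp
    linear_combination -hbalance

lemma extProfile_eq_backProfile (hρ : ρ ≠ 0) (hv : IsTwoChoiceProfile ρ K v) {n : ℕ}
    (hn : n ≤ K + 1) : extProfile K v (K + 1 - n) = backProfile ρ (extProfile K v K) n := by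
  induction n with
  | zero => exact extProfile_of_le le_rfl
  | succ n ih =>
    rw [backProfile, ← ih (by omega), show K + 1 - n = K - n + 1 by omega,
      ← hv.extProfile_sq hρ (by omega), Real.sqrt_sq (hv.extProfile_nonneg _)]
    congr 1
    omega

lemma eq_profileFromLast (hρ : ρ ≠ 0) (hv : IsTwoChoiceProfile ρ K v) :
    v = profileFromLast ρ (extProfile K v K) K := by
  funext k
  rw [profileFromLast, ← hv.extProfile_eq_backProfile hρ (by omega),
    show K + 1 - (K + 1 - k) = k by omega, extProfile_of_lt k.isLt]

end IsTwoChoiceProfile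

end Profile

theorem two_choice_profile_exists_unique_general (ρ : ℝ) (hρ : 0 < ρ) (K : ℕ) :
    ∃! v : Fin (K + 1) → ℝ, IsTwoChoiceProfile ρ K v := by
  obtain ⟨t, ⟨-, ht⟩, hunique⟩ := existsUnique_backProfile_succ_eq_one hρ.le K
  refine ⟨profileFromLast ρ t K, isTwoChoiceProfile_profileFromLast hρ ht, fun v hv => ?_⟩
  have hfirst : backProfile ρ (extProfile K v K) (K + 1) = 1 := by
    rw [← hv.extProfile_eq_backProfile hρ.ne' le_rfl, Nat.sub_self, hv.1]
  rw [hv.eq_profileFromLast hρ.ne', hunique _ ⟨hv.2.2.1, hfirst⟩]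

/-- For every real ρ > 0 and every integer K ≥ 1, there exists a unique
two-choice profile for (ρ, K). -/
theorem two_choice_profile_exists_unique (ρ : ℝ) (hρ : 0 < ρ) (K : ℕ) (hK : 1 ≤ K) :
    ∃! v : Fin (K + 1) → ℝ, IsTwoChoiceProfile ρ K v :=
  two_choice_profile_exists_unique_general ρ hρ K
end
end

section
/- Let C ≥ 1 be an integer, let α_1, …, α_C > 0 with α_1 + … + α_C = 1, let K_1, …, K_C ≥ 1 be integers, let r_1, …, r_C ∈ (0, 1] with max_i r_i = 1, let Λ > 0 and s > 0. Then there exists a unique pair (ρ, u) with ρ > 0 and u = (u_{i,k})_{1 ≤ i ≤ C, 0 ≤ k ≤ K_i} such that: for each i, (u_{i,0}, …, u_{i,K_i}) is a two-choice profile for (ρ r_i, K_i), and s = Λρ + Σ_{c=1}^{C} α_c Σ_{k=1}^{K_c} u_{c,k}. Moreover u_{i,k} = ν_{ρ r_i, K_i}(k) for all i, k. -/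
open Finset Real

noncomputable section

open Filter Topology

/-!
Telescoping the recursion of a two-choice profile `v` for `(ρ, K)` gives
`v_{k+1} = ρ (v_k² - v_K²)`, so `x := ρ v_K` determines the whole profile:
`ρ v_{K-n} = G_n(x)` for the nested radical `G_0(x) = x`, `G_{n+1}(x) = √(G_n(x) + x²)`,
and `v_0 = 1` forces `G_K(x) = ρ`. As `G_K` is a continuous increasing bijection of `[0, ∞)`,
this gives a profile depending continuously on `ρ`. A minimal-counterexample argument
shows that profiles increase pointwise with `ρ` (and hence are unique), so the total number
of customers `Λ ρ + Σ_c α_c Σ_k ν_{ρ r_c, K_c}(k)` is a continuous strictly increasing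
function of `ρ`, growing from `0` to `∞`: it takes the value `s` exactly once.
-/

def nestedSqrt (x : ℝ) : ℕ → ℝ
  | 0 => x
  | n + 1 => √(nestedSqrt x n + x ^ 2)

section NestedSqrt

variable {x : ℝ}

lemma nestedSqrt_nonneg (hx : 0 ≤ x) : ∀ n, 0 ≤ nestedSqrt x n
  | 0 => hx
  | _ + 1 => Real.sqrt_nonneg _

lemma nestedSqrt_succ_sq (hx : 0 ≤ x) (n : ℕ) :
    nestedSqrt x (n + 1) ^ 2 = nestedSqrt x n + x ^ 2 :=
  Real.sq_sqrt (add_nonneg (nestedSqrt_nonneg hx n) (sq_nonneg x))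

lemma nestedSqrt_zero_left : ∀ n, nestedSqrt 0 n = 0
  | 0 => rfl
  | n + 1 => by simp [nestedSqrt, nestedSqrt_zero_left n]

lemma monotone_nestedSqrt (hx : 0 ≤ x) : Monotone (nestedSqrt x) := by
  refine monotone_nat_of_le_succ fun n => ?_
  induction n with
  | zero => exact Real.le_sqrt_of_sq_le (by simp only [nestedSqrt]; linarith)
  | succ n ih => exact Real.sqrt_le_sqrt (by linarith)

lemma le_nestedSqrt (hx : 0 ≤ x) (n : ℕ) : x ≤ nestedSqrt x n :=
  monotone_nestedSqrt hx (Nat.zero_le n)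

lemma strictMonoOn_nestedSqrt (n : ℕ) : StrictMonoOn (nestedSqrt · n) (Set.Ici 0) := by
  intro x hx y hy hxy
  induction n with
  | zero => exact hxy
  | succ n ih =>
    have hsq : x ^ 2 < y ^ 2 := pow_lt_pow_left₀ hxy hx two_ne_zero
    exact Real.sqrt_lt_sqrt (add_nonneg (nestedSqrt_nonneg hx n) (sq_nonneg x))
      (by dsimp only at ih; linarith)

lemma continuous_nestedSqrt (n : ℕ) : Continuous (nestedSqrt · n) := by
  induction n with
  | zero => exact continuous_id
  | succ n ih => exact (ih.add (continuous_pow 2)).sqrt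

end NestedSqrt

def nestedSqrtInv (n : ℕ) : ℝ → ℝ :=
  Function.invFunOn (nestedSqrt · n) (Set.Ici 0)

section NestedSqrtInv

variable {ρ : ℝ}

lemma exists_nestedSqrt_eq (hρ : 0 ≤ ρ) (n : ℕ) : ∃ x ∈ Set.Ici 0, nestedSqrt x n = ρ := by
  obtain ⟨x, hx, hxρ⟩ := intermediate_value_Icc hρ (continuous_nestedSqrt n).continuousOn
    ⟨(nestedSqrt_zero_left n).trans_le hρ, le_nestedSqrt hρ n⟩
  exact ⟨x, hx.1, hxρ⟩

lemma nestedSqrtInv_nonneg (hρ : 0 ≤ ρ) (n : ℕ) : 0 ≤ nestedSqrtInv n ρ :=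
  Function.invFunOn_mem (exists_nestedSqrt_eq hρ n)

lemma nestedSqrt_nestedSqrtInv (hρ : 0 ≤ ρ) (n : ℕ) : nestedSqrt (nestedSqrtInv n ρ) n = ρ :=
  Function.invFunOn_eq (exists_nestedSqrt_eq hρ n)

lemma nestedSqrtInv_nestedSqrt {x : ℝ} (hx : 0 ≤ x) (n : ℕ) :
    nestedSqrtInv n (nestedSqrt x n) = x :=
  (strictMonoOn_nestedSqrt n).injOn.leftInvOn_invFunOn hx

lemma monotoneOn_nestedSqrtInv (n : ℕ) : MonotoneOn (nestedSqrtInv n) (Set.Ici 0) := by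
  intro ρ hρ σ hσ hρσ
  rwa [← (strictMonoOn_nestedSqrt n).le_iff_le (nestedSqrtInv_nonneg hρ n)
    (nestedSqrtInv_nonneg hσ n), nestedSqrt_nestedSqrtInv hρ, nestedSqrt_nestedSqrtInv hσ]

lemma continuousAt_nestedSqrtInv (hρ : 0 < ρ) (n : ℕ) : ContinuousAt (nestedSqrtInv n) ρ := by
  have hpos : 0 < nestedSqrtInv n ρ := by
    refine (nestedSqrtInv_nonneg hρ.le n).lt_of_ne fun h => hρ.ne ?_
    rw [← nestedSqrt_nestedSqrtInv hρ.le n, ← h, nestedSqrt_zero_left]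
  have hsurj : Set.Ici 0 ⊆ nestedSqrtInv n '' Set.Ici 0 := fun x hx =>
    ⟨nestedSqrt x n, nestedSqrt_nonneg hx n, nestedSqrtInv_nestedSqrt hx n⟩
  exact continuousAt_of_monotoneOn_of_image_mem_nhds (monotoneOn_nestedSqrtInv n)
    (Ici_mem_nhds hρ) (Filter.mem_of_superset (Ici_mem_nhds hpos) hsurj)

end NestedSqrtInv

section Profile

variable {ρ ρ' : ℝ} {K : ℕ} {v w : Fin (K + 1) → ℝ}

lemma extProfile_of_le_s4 (v : Fin (K + 1) → ℝ) {n : ℕ} (hn : n ≤ K) :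
    extProfile K v n = v ⟨n, Nat.lt_succ_of_le hn⟩ :=
  dif_pos _

lemma extProfile_of_lt_s4 (v : Fin (K + 1) → ℝ) {n : ℕ} (hn : K < n) : extProfile K v n = 0 :=
  dif_neg (by omega)

namespace IsTwoChoiceProfile

lemma antitone (hv : IsTwoChoiceProfile ρ K v) : Antitone (extProfile K v) := by
  refine antitone_nat_of_succ_le fun n => ?_
  rcases lt_trichotomy n K with hn | rfl | hn
  · exact hv.2.1 n hn
  · rw [extProfile_of_lt_s4 v (Nat.lt_succ_self n)]
    exact hv.2.2.1
  · rw [extProfile_of_lt_s4 v hn, extProfile_of_lt_s4 v (by omega)]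

lemma nonneg (hv : IsTwoChoiceProfile ρ K v) (n : ℕ) : 0 ≤ extProfile K v n := by
  rcases le_or_gt n K with hn | hn
  · exact hv.2.2.1.trans (hv.antitone hn)
  · rw [extProfile_of_lt_s4 v hn]

lemma succ_eq (hv : IsTwoChoiceProfile ρ K v) {k : ℕ} (hk : k ≤ K) :
    extProfile K v (k + 1) = ρ * (extProfile K v k ^ 2 - extProfile K v K ^ 2) := by
  induction hk using Nat.decreasingInduction with
  | self => rw [extProfile_of_lt_s4 v (Nat.lt_succ_self K)]; ring
  | of_succ k hk ih =>
    have hrec := hv.2.2.2 (k + 1) (by omega) hk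
    rw [Nat.add_sub_cancel] at hrec
    linear_combination hrec + ih

lemma of_succ_eq (h0 : extProfile K v 0 = 1)
    (hanti : ∀ k < K, extProfile K v (k + 1) ≤ extProfile K v k) (hK : 0 ≤ extProfile K v K)
    (hsucc : ∀ k ≤ K, extProfile K v (k + 1) = ρ * (extProfile K v k ^ 2 - extProfile K v K ^ 2)) :
    IsTwoChoiceProfile ρ K v := by
  refine ⟨h0, hanti, hK, fun k hk1 hkK => ?_⟩
  have hk := hsucc (k - 1) (by omega)
  rw [Nat.sub_add_cancel hk1] at hk
  linear_combination hk - hsucc k hkK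

/-- The comparison principle. If `w` dropped below `v`, first at index `j`, then the tail identity
at `j - 1` forces `E := ρ' w_K² - ρ v_K² > (ρ' - ρ) v_{j-1}²`, and the same identity then keeps
`w` below `v` up to index `K + 1`, where both vanish. -/
lemma le_of_le (hv : IsTwoChoiceProfile ρ K v) (hw : IsTwoChoiceProfile ρ' K w)
    (hρ' : 0 ≤ ρ') (hρρ' : ρ ≤ ρ') (n : ℕ) : extProfile K v n ≤ extProfile K w n := by
  classical
  set a := extProfile K v
  set b := extProfile K w
  by_contra! hn
  have hex : ∃ n, b n < a n := ⟨n, hn⟩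
  obtain ⟨j, hj, hmin⟩ : ∃ j, b j < a j ∧ ∀ i < j, a i ≤ b i :=
    ⟨Nat.find hex, Nat.find_spec hex, fun i hi => not_lt.1 (Nat.find_min hex hi)⟩
  obtain ⟨i, rfl⟩ : ∃ i, j = i + 1 :=
    Nat.exists_eq_succ_of_ne_zero (by rintro rfl; simp [a, b, hv.1, hw.1] at hj)
  have hiK : i ≤ K := by
    by_contra! hi
    rw [show a (i + 1) = 0 from extProfile_of_lt_s4 v (by omega)] at hj
    exact (hw.nonneg _).not_gt hj
  set E := ρ' * b K ^ 2 - ρ * a K ^ 2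
  have hdiff : ∀ k ≤ K, b (k + 1) - a (k + 1) = ρ' * b k ^ 2 - ρ * a k ^ 2 - E := by
    intro k hk
    rw [show b (k + 1) = _ from hw.succ_eq hk, show a (k + 1) = _ from hv.succ_eq hk]
    ring
  have hE : (ρ' - ρ) * a i ^ 2 < E := by
    have hsq := mul_le_mul_of_nonneg_left
      (pow_le_pow_left₀ (hv.nonneg i) (hmin i (lt_add_one i)) 2) hρ'
    linarith [hdiff i hiK]
  have hbelow : ∀ k, i + 1 ≤ k → k ≤ K + 1 → b k < a k := by
    intro k hk
    induction k, hk using Nat.le_induction with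
    | base => exact fun _ => hj
    | succ k hk ih =>
      intro hkK
      have h1 := mul_le_mul_of_nonneg_left
        (pow_le_pow_left₀ (hw.nonneg k) (ih (by omega)).le 2) hρ'
      have h2 := mul_le_mul_of_nonneg_left
        (pow_le_pow_left₀ (hv.nonneg k) (hv.antitone (by omega : i ≤ k)) 2) (sub_nonneg.2 hρρ')
      linarith [hdiff k (by omega)]
  have hlast := hbelow (K + 1) (by omega) le_rfl
  simp only [a, b, extProfile_of_lt_s4 _ (Nat.lt_succ_self K), lt_self_iff_false] at hlast

lemma unique (hv : IsTwoChoiceProfile ρ K v) (hw : IsTwoChoiceProfile ρ K w) (hρ : 0 ≤ ρ) :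
    v = w := by
  funext k
  have h₁ := hv.le_of_le hw hρ le_rfl k
  have h₂ := hw.le_of_le hv hρ le_rfl k
  rw [extProfile_of_le_s4 v (Fin.is_le k), extProfile_of_le_s4 w (Fin.is_le k)] at h₁ h₂
  exact le_antisymm h₁ h₂

end IsTwoChoiceProfile

def nestedSqrtProfile (ρ : ℝ) (K : ℕ) : Fin (K + 1) → ℝ :=
  fun k => nestedSqrt (nestedSqrtInv K ρ) (K - k) / ρ

lemma isTwoChoiceProfile_nestedSqrtProfile (hρ : 0 < ρ) (K : ℕ) :
    IsTwoChoiceProfile ρ K (nestedSqrtProfile ρ K) := by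
  set x := nestedSqrtInv K ρ
  have hx : 0 ≤ x := nestedSqrtInv_nonneg hρ.le K
  have hv : ∀ n ≤ K, extProfile K (nestedSqrtProfile ρ K) n = nestedSqrt x (K - n) / ρ :=
    fun n hn => extProfile_of_le_s4 _ hn
  have hvK : extProfile K (nestedSqrtProfile ρ K) K = x / ρ := by
    rw [hv K le_rfl, Nat.sub_self]
    rfl
  refine .of_succ_eq ?_ (fun k hk => ?_) ?_ (fun k hk => ?_)
  · rw [hv 0 (Nat.zero_le K), Nat.sub_zero, nestedSqrt_nestedSqrtInv hρ.le, div_self hρ.ne']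
  · rw [hv k hk.le, hv (k + 1) hk]
    exact div_le_div_of_nonneg_right (monotone_nestedSqrt hx (by omega)) hρ.le
  · rw [hvK]
    positivity
  · rw [hvK]
    rcases hk.lt_or_eq with hk | rfl
    · rw [hv k hk.le, hv (k + 1) hk, show K - k = K - (k + 1) + 1 by omega]
      rw [div_pow, div_pow, nestedSqrt_succ_sq hx]
      field_simp
      ring
    · rw [extProfile_of_lt_s4 _ (Nat.lt_succ_self k), hvK]
      ring

lemma isTwoChoiceProfile_nu (hρ : 0 < ρ) (K : ℕ) : IsTwoChoiceProfile ρ K (nu ρ K) :=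
  Classical.epsilon_spec ⟨_, isTwoChoiceProfile_nestedSqrtProfile hρ K⟩

lemma IsTwoChoiceProfile.eq_nu (hv : IsTwoChoiceProfile ρ K v) (hρ : 0 < ρ) : v = nu ρ K :=
  hv.unique (isTwoChoiceProfile_nu hρ K) hρ.le

lemma nuV_eq_nestedSqrt (hρ : 0 < ρ) {n : ℕ} (hn : n ≤ K) :
    nuV ρ K n = nestedSqrt (nestedSqrtInv K ρ) (K - n) / ρ := by
  rw [nuV, ← (isTwoChoiceProfile_nestedSqrtProfile hρ K).eq_nu hρ]
  exact extProfile_of_le_s4 _ hn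

lemma continuousAt_nuV (hρ : 0 < ρ) (K n : ℕ) : ContinuousAt (nuV · K n) ρ := by
  rcases le_or_gt n K with hn | hn
  · have hformula : (fun σ => nestedSqrt (nestedSqrtInv K σ) (K - n) / σ) =ᶠ[𝓝 ρ] (nuV · K n) :=
      eventually_of_mem (Ioi_mem_nhds hρ) fun σ hσ => (nuV_eq_nestedSqrt hσ hn).symm
    refine ContinuousAt.congr ?_ hformula
    exact ((continuous_nestedSqrt _).continuousAt.comp (continuousAt_nestedSqrtInv hρ K)).div
      continuousAt_id hρ.ne'
  · simp only [nuV, extProfile_of_lt_s4 _ hn]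
    exact continuousAt_const

lemma monotoneOn_nuV (K n : ℕ) : MonotoneOn (nuV · K n) (Set.Ioi 0) :=
  fun _ hρ _ hσ hρσ =>
    (isTwoChoiceProfile_nu hρ K).le_of_le (isTwoChoiceProfile_nu hσ K) (le_of_lt hσ) hρσ n

lemma nuV_le (hρ : 0 < ρ) {n : ℕ} (hn : 1 ≤ n) : nuV ρ K n ≤ ρ := by
  have hv := isTwoChoiceProfile_nu hρ K
  have h1 : nuV ρ K 1 = ρ * (1 - nuV ρ K K ^ 2) := by
    rw [nuV, hv.succ_eq (Nat.zero_le K), hv.1, one_pow]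
  calc nuV ρ K n ≤ nuV ρ K 1 := hv.antitone hn
    _ ≤ ρ := by rw [h1]; nlinarith [sq_nonneg (nuV ρ K K)]

end Profile

def meanQueueLength (ρ : ℝ) (K : ℕ) : ℝ := ∑ k ∈ Icc 1 K, nuV ρ K k

section MeanQueueLength

variable {ρ : ℝ} {K : ℕ}

lemma IsTwoChoiceProfile.sum_eq_meanQueueLength {v : Fin (K + 1) → ℝ}
    (hv : IsTwoChoiceProfile ρ K v) (hρ : 0 < ρ) :
    ∑ k ∈ Icc 1 K, extProfile K v k = meanQueueLength ρ K := by
  rw [hv.eq_nu hρ]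
  rfl

lemma meanQueueLength_nonneg (hρ : 0 < ρ) (K : ℕ) : 0 ≤ meanQueueLength ρ K :=
  sum_nonneg fun k _ => (isTwoChoiceProfile_nu hρ K).nonneg k

lemma meanQueueLength_le (hρ : 0 < ρ) (K : ℕ) : meanQueueLength ρ K ≤ K * ρ := by
  calc meanQueueLength ρ K ≤ ∑ _k ∈ Icc 1 K, ρ :=
        sum_le_sum fun k hk => nuV_le hρ (mem_Icc.1 hk).1
    _ = K * ρ := by simp

lemma monotoneOn_meanQueueLength (K : ℕ) : MonotoneOn (meanQueueLength · K) (Set.Ioi 0) :=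
  fun _ hρ _ hσ hρσ => sum_le_sum fun k _ => monotoneOn_nuV K k hρ hσ hρσ

lemma continuousAt_meanQueueLength (hρ : 0 < ρ) (K : ℕ) :
    ContinuousAt (meanQueueLength · K) ρ :=
  tendsto_finsetSum _ fun k _ => continuousAt_nuV hρ K k

end MeanQueueLength

lemma existsUnique_pos_eq_of_strictMonoOn {f : ℝ → ℝ} {a b s : ℝ} (ha : 0 < a) (hab : a ≤ b)
    (hmono : StrictMonoOn f (Set.Ioi 0)) (hcont : ContinuousOn f (Set.Ioi 0))
    (hfa : f a ≤ s) (hfb : s ≤ f b) : ∃! ρ, 0 < ρ ∧ f ρ = s := by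
  obtain ⟨ρ, hρ, hfρ⟩ := intermediate_value_Icc hab
    (hcont.mono fun x hx => ha.trans_le hx.1) ⟨hfa, hfb⟩
  have hρ0 : 0 < ρ := ha.trans_le hρ.1
  exact ⟨ρ, ⟨hρ0, hfρ⟩, fun σ hσ => hmono.injOn hσ.1 hρ0 (hσ.2.trans hfρ.symm)⟩

section TotalCustomers

variable {ι : Type*} [Fintype ι] (α : ι → ℝ) (K : ι → ℕ) (r : ι → ℝ) (Λ : ℝ)

def totalCustomers (ρ : ℝ) : ℝ := Λ * ρ + ∑ i, α i * meanQueueLength (ρ * r i) (K i)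

variable {α r Λ}

lemma strictMonoOn_totalCustomers (hα : ∀ i, 0 ≤ α i) (hr : ∀ i, 0 < r i) (hΛ : 0 < Λ) :
    StrictMonoOn (totalCustomers α K r Λ) (Set.Ioi 0) := by
  intro ρ hρ σ hσ hρσ
  have hsum : ∑ i, α i * meanQueueLength (ρ * r i) (K i)
      ≤ ∑ i, α i * meanQueueLength (σ * r i) (K i) :=
    sum_le_sum fun i _ => mul_le_mul_of_nonneg_left (monotoneOn_meanQueueLength (K i)
      (mul_pos hρ (hr i)) (mul_pos hσ (hr i)) (by gcongr; exact (hr i).le)) (hα i)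
  unfold totalCustomers
  linarith [mul_lt_mul_of_pos_left hρσ hΛ]

lemma continuousOn_totalCustomers (hr : ∀ i, 0 < r i) :
    ContinuousOn (totalCustomers α K r Λ) (Set.Ioi 0) := fun _ hρ =>
  ((continuousAt_const.mul continuousAt_id).add (tendsto_finsetSum _ fun i _ =>
    continuousAt_const.mul ((continuousAt_meanQueueLength (mul_pos hρ (hr i)) (K i)).comp
      (f := (· * r i)) (continuousAt_id.mul continuousAt_const)))).continuousWithinAt

lemma le_totalCustomers (hα : ∀ i, 0 ≤ α i) (hr : ∀ i, 0 < r i) {ρ : ℝ} (hρ : 0 < ρ) :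
    Λ * ρ ≤ totalCustomers α K r Λ ρ :=
  le_add_of_nonneg_right <| sum_nonneg fun i _ =>
    mul_nonneg (hα i) (meanQueueLength_nonneg (mul_pos hρ (hr i)) _)

lemma totalCustomers_le (hα : ∀ i, 0 ≤ α i) (hr : ∀ i, 0 < r i) {ρ : ℝ} (hρ : 0 < ρ) :
    totalCustomers α K r Λ ρ ≤ (Λ + ∑ i, α i * K i * r i) * ρ := by
  have hsum : ∑ i, α i * meanQueueLength (ρ * r i) (K i) ≤ ∑ i, α i * (K i * (ρ * r i)) :=
    sum_le_sum fun i _ =>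
      mul_le_mul_of_nonneg_left (meanQueueLength_le (mul_pos hρ (hr i)) _) (hα i)
  have hB : (∑ i, α i * K i * r i) * ρ = ∑ i, α i * (K i * (ρ * r i)) := by
    rw [sum_mul]
    exact sum_congr rfl fun i _ => by ring
  unfold totalCustomers
  linarith

lemma existsUnique_totalCustomers_eq (hα : ∀ i, 0 ≤ α i) (hr : ∀ i, 0 < r i) (hΛ : 0 < Λ)
    {s : ℝ} (hs : 0 < s) : ∃! ρ, 0 < ρ ∧ totalCustomers α K r Λ ρ = s := by
  have hB : 0 ≤ ∑ i, α i * K i * r i :=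
    sum_nonneg fun i _ => mul_nonneg (mul_nonneg (hα i) (Nat.cast_nonneg _)) (hr i).le
  refine existsUnique_pos_eq_of_strictMonoOn (a := s / (Λ + ∑ i, α i * K i * r i)) (b := s / Λ)
    (by positivity) (by gcongr; linarith) (strictMonoOn_totalCustomers K hα hr hΛ)
    (continuousOn_totalCustomers K hr) ?_ ?_
  · refine (totalCustomers_le K hα hr (by positivity)).trans_eq ?_
    field_simp
  · refine le_of_eq_of_le ?_ (le_totalCustomers K hα hr (by positivity))
    field_simp

end TotalCustomers

theorem cluster_equilibrium_exists_unique_general (C : ℕ)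
    (α : Fin C → ℝ) (hα : ∀ i, 0 < α i)
    (K : Fin C → ℕ)
    (r : Fin C → ℝ) (hr0 : ∀ i, 0 < r i)
    (Λ s : ℝ) (hΛ : 0 < Λ) (hs : 0 < s) :
    (∃! p : ℝ × (∀ i : Fin C, Fin (K i + 1) → ℝ),
      0 < p.1 ∧ (∀ i, IsTwoChoiceProfile (p.1 * r i) (K i) (p.2 i)) ∧
      s = Λ * p.1 + ∑ i, α i * ∑ k ∈ Finset.Icc 1 (K i), extProfile (K i) (p.2 i) k) ∧
    ∀ (ρ : ℝ) (u : ∀ i : Fin C, Fin (K i + 1) → ℝ),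
      0 < ρ → (∀ i, IsTwoChoiceProfile (ρ * r i) (K i) (u i)) →
      s = Λ * ρ + ∑ i, α i * ∑ k ∈ Finset.Icc 1 (K i), extProfile (K i) (u i) k →
      ∀ i k, u i k = nu (ρ * r i) (K i) k := by
  have hpos {ρ : ℝ} (hρ : 0 < ρ) (i : Fin C) := mul_pos hρ (hr0 i)
  have htotal {ρ : ℝ} (hρ : 0 < ρ) {u : ∀ i : Fin C, Fin (K i + 1) → ℝ}
      (hu : ∀ i, IsTwoChoiceProfile (ρ * r i) (K i) (u i)) :
      Λ * ρ + ∑ i, α i * ∑ k ∈ Icc 1 (K i), extProfile (K i) (u i) k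
        = totalCustomers α K r Λ ρ := by
    simp only [totalCustomers, (hu _).sum_eq_meanQueueLength (hpos hρ _)]
  have hnu {ρ : ℝ} (hρ : 0 < ρ) (i : Fin C) :=
    isTwoChoiceProfile_nu (hpos hρ i) (K i)
  obtain ⟨ρ₀, ⟨hρ₀, hs₀⟩, huniq⟩ :=
    existsUnique_totalCustomers_eq K (fun i => (hα i).le) hr0 hΛ hs
  refine ⟨⟨(ρ₀, fun i => nu (ρ₀ * r i) (K i)), ⟨hρ₀, hnu hρ₀, by rw [htotal hρ₀ (hnu hρ₀), hs₀]⟩,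
    ?_⟩, ?_⟩
  · rintro ⟨ρ, u⟩ ⟨hρ, hu, hsρ⟩
    obtain rfl : ρ = ρ₀ := huniq ρ ⟨hρ, by rw [← htotal hρ hu, hsρ]⟩
    simp only [Prod.mk.injEq, true_and]
    funext i
    exact (hu i).eq_nu (hpos hρ i)
  · intro ρ u hρ hu _ i k
    rw [(hu i).eq_nu (hpos hρ i)]

/-- unique equilibrium point of the clustered two-choice mean-field model:
a unique pair `(ρ, u)` with `ρ > 0`, each `u_i` a two-choice profile for `(ρ r_i, K_i)`, and
`s = Λρ + Σ_c α_c Σ_{k=1}^{K_c} u_{c,k}`; moreover `u_{i,k} = ν_{ρ r_i, K_i}(k)`. -/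
theorem cluster_equilibrium_exists_unique (C : ℕ) (hC : 1 ≤ C)
    (α : Fin C → ℝ) (hα : ∀ i, 0 < α i) (hαsum : ∑ i, α i = 1)
    (K : Fin C → ℕ) (hK : ∀ i, 1 ≤ K i)
    (r : Fin C → ℝ) (hr0 : ∀ i, 0 < r i) (hr1 : ∀ i, r i ≤ 1) (hrmax : ∃ i, r i = 1)
    (Λ s : ℝ) (hΛ : 0 < Λ) (hs : 0 < s) :
    (∃! p : ℝ × (∀ i : Fin C, Fin (K i + 1) → ℝ),
      0 < p.1 ∧ (∀ i, IsTwoChoiceProfile (p.1 * r i) (K i) (p.2 i)) ∧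
      s = Λ * p.1 + ∑ i, α i * ∑ k ∈ Finset.Icc 1 (K i), extProfile (K i) (p.2 i) k) ∧
    ∀ (ρ : ℝ) (u : ∀ i : Fin C, Fin (K i + 1) → ℝ),
      0 < ρ → (∀ i, IsTwoChoiceProfile (ρ * r i) (K i) (u i)) →
      s = Λ * ρ + ∑ i, α i * ∑ k ∈ Finset.Icc 1 (K i), extProfile (K i) (u i) k →
      ∀ i k, u i k = nu (ρ * r i) (K i) k :=
  cluster_equilibrium_exists_unique_general C α hα K r hr0 Λ s hΛ hs
end
end

section
/- Let C ≥ 1 be an integer, let α_1, …, α_C > 0 with α_1 + … + α_C = 1, let K_1, …, K_C ≥ 1 be integers, let r_1, …, r_C ∈ (0, 1] with max_i r_i = 1, let β_1, …, β_C ∈ [0, 1], let Λ > 0 and s > 0. Then there exists a unique pair (ρ, u) with ρ > 0 and u = (u_{i,k})_{1 ≤ i ≤ C, 0 ≤ k ≤ K_i} such that: for each i, 1 = u_{i,0} ≥ u_{i,1} ≥ … ≥ u_{i,K_i} ≥ 0 and, with the convention u_{i,K_i+1} = 0, u_{i,k} − u_{i,k+1} = ρ r_i (β_i(u_{i,k−1}²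 − u_{i,k}²) + (1 − β_i)(u_{i,k−1} − u_{i,k})) for every 1 ≤ k ≤ K_i, and s = Λρ + Σ_{c=1}^{C} α_c Σ_{k=1}^{K_c} u_{c,k}. -/
/-!
Telescoping the balance equations of a profile with load `a` and writing
`Q x = β x² + (1 - β) x`, they become `a Q(u_k) = u_{k+1} + c` for `k ≤ K`, with `u_{K+1} = 0`
and `c = a Q(u_K)`. Since `Q` is increasing on `[0, ∞)`, they can be solved backwards from
`u_{K+1} = 0`, the result being increasing in `c`; the condition `u_0 = 1` then fixes `c`, so the
profile exists and is unique (a shooting argument). It is continuous in `a`, and each `u_k` is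
nondecreasing in `a`: comparing two loads, the inequality `u_k ≤ u'_k` propagates forwards from
`u_0 = u'_0` while `u_k` is large and backwards from `u_{K+1} = u'_{K+1}` once it is small.
Hence `ρ ↦ Λρ + Σ_c α_c Σ_k u_{c,k}(ρ r_c)` is continuous and strictly increasing, lies between
`Λρ` and a multiple of `ρ`, and takes the value `s` exactly once.
-/

open Finset Real

noncomputable section

/-- `v` is an incentive profile for `(ρ, β, K)`. -/
def IsIncentiveProfile (ρ β : ℝ) (K : ℕ) (v : Fin (K + 1) → ℝ) : Prop :=
  extProfile K v 0 = 1 ∧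
  (∀ k < K, extProfile K v (k + 1) ≤ extProfile K v k) ∧
  0 ≤ extProfile K v K ∧
  ∀ k, 1 ≤ k → k ≤ K →
    extProfile K v k - extProfile K v (k + 1) =
      ρ * (β * ((extProfile K v (k - 1)) ^ 2 - (extProfile K v k) ^ 2) +
        (1 - β) * (extProfile K v (k - 1) - extProfile K v k))

/-- Proportion of arrivals sent to queues of length at least `k` when a proportion `x` of the
queues has length at least `k`: `x²` under the two-choice rule, `x` under the uniform one. -/
def joinRate (β x : ℝ) : ℝ := β * x ^ 2 + (1 - β) * x

/-- The nonnegative root of `β x² + (1 - β) x = y`, in the rationalized form that stays valid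
at `β = 0`; negative `y` are first clamped to `0`. -/
def joinRateInv (β y : ℝ) : ℝ :=
  2 * max y 0 / ((1 - β) + √((1 - β) ^ 2 + 4 * β * max y 0))

section JoinRate

@[simp] lemma joinRate_one (β : ℝ) : joinRate β 1 = 1 := by simp [joinRate]

lemma joinRate_sub (β x y : ℝ) :
    joinRate β x - joinRate β y = β * (x ^ 2 - y ^ 2) + (1 - β) * (x - y) := by
  simp only [joinRate]; ring

@[simp] lemma joinRateInv_zero (β : ℝ) : joinRateInv β 0 = 0 := by simp [joinRateInv]

variable {β : ℝ}

lemma joinRate_nonneg (hβ : β ∈ Set.Icc 0 1) {x : ℝ} (hx : 0 ≤ x) : 0 ≤ joinRate β x := by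
  have := hβ.1; have := hβ.2
  unfold joinRate; positivity

lemma strictMonoOn_joinRate (hβ : β ∈ Set.Icc 0 1) : StrictMonoOn (joinRate β) (Set.Ici 0) := by
  intro x (hx : 0 ≤ x) y _ hxy
  obtain ⟨hβ0, hβ1⟩ := hβ
  have hfactor : 0 < β * (x + y) + (1 - β) := by
    rcases hβ1.lt_or_eq with hβ1 | rfl
    · have := mul_nonneg hβ0 (add_nonneg hx (hx.trans hxy.le)); linarith
    · linarith
  have hdiff : joinRate β y - joinRate β x = (y - x) * (β * (x + y) + (1 - β)) := by
    unfold joinRate; ring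
  linarith [mul_pos (sub_pos.2 hxy) hfactor]

lemma joinRateInv_nonneg (hβ1 : β ≤ 1) (y : ℝ) : 0 ≤ joinRateInv β y := by
  unfold joinRateInv
  have := sub_nonneg.2 hβ1
  positivity

lemma joinRate_joinRateInv (hβ : β ∈ Set.Icc 0 1) {y : ℝ} (hy : 0 ≤ y) :
    joinRate β (joinRateInv β y) = y := by
  obtain ⟨hβ0, hβ1⟩ := hβ
  rw [joinRateInv, max_eq_left hy]
  have hrad : 0 ≤ (1 - β) ^ 2 + 4 * β * y := by positivity
  have hsq := Real.sq_sqrt hrad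
  set d := √((1 - β) ^ 2 + 4 * β * y)
  rcases (add_nonneg (sub_nonneg.2 hβ1) (Real.sqrt_nonneg _) : 0 ≤ 1 - β + d).eq_or_lt
    with hd | hd
  · have hy0 : y = 0 := by nlinarith [Real.sqrt_nonneg ((1 - β) ^ 2 + 4 * β * y)]
    simp [hy0, joinRate]
  · rw [joinRate]
    field_simp
    linear_combination (-y) * hsq

lemma joinRateInv_joinRate (hβ : β ∈ Set.Icc 0 1) {x : ℝ} (hx : 0 ≤ x) :
    joinRateInv β (joinRate β x) = x :=
  (strictMonoOn_joinRate hβ).injOn (joinRateInv_nonneg hβ.2 _) hx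
    (joinRate_joinRateInv hβ (joinRate_nonneg hβ hx))

lemma joinRateInv_one (hβ : β ∈ Set.Icc 0 1) : joinRateInv β 1 = 1 := by
  simpa using joinRateInv_joinRate hβ zero_le_one

lemma strictMonoOn_joinRateInv (hβ : β ∈ Set.Icc 0 1) :
    StrictMonoOn (joinRateInv β) (Set.Ici 0) := by
  intro x hx y hy hxy
  by_contra! h
  have := (strictMonoOn_joinRate hβ).monotoneOn (joinRateInv_nonneg hβ.2 y)
    (joinRateInv_nonneg hβ.2 x) h
  rw [joinRate_joinRateInv hβ hx, joinRate_joinRateInv hβ hy] at this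
  exact this.not_gt hxy

lemma monotone_joinRateInv (hβ : β ∈ Set.Icc 0 1) : Monotone (joinRateInv β) := by
  have hclamp : ∀ y, joinRateInv β y = joinRateInv β (max y 0) := by simp [joinRateInv]
  intro x y hxy
  rw [hclamp x, hclamp y]
  exact (strictMonoOn_joinRateInv hβ).monotoneOn (le_max_right x 0) (le_max_right y 0)
    (max_le_max_right 0 hxy)

lemma continuous_joinRateInv (hβ : β ∈ Set.Icc 0 1) : Continuous (joinRateInv β) := by
  have hmax : Continuous fun y : ℝ => max y 0 := continuous_id.max continuous_const
  rcases hβ.2.lt_or_eq with hβ1 | rfl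
  · refine (continuous_const.mul hmax).div (continuous_const.add
      (Real.continuous_sqrt.comp (continuous_const.add (continuous_const.mul hmax)))) ?_
    intro y
    have := Real.sqrt_nonneg ((1 - β) ^ 2 + 4 * β * max y 0)
    linarith
  · have : joinRateInv 1 = fun y => √(max y 0) := by
      funext y
      have h4 : (0 : ℝ) ^ 2 + 4 * 1 * max y 0 = 2 ^ 2 * max y 0 := by ring
      rw [joinRateInv, sub_self, zero_add, h4, Real.sqrt_mul (by positivity),
        Real.sqrt_sq zero_le_two, mul_div_mul_left _ _ two_ne_zero, Real.div_sqrt]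
    rw [this]
    exact Real.continuous_sqrt.comp hmax

end JoinRate

/-- `backwardProfile β a c n` is `u_{K+1-n}`, solving the telescoped balance equations
`a * joinRate β u_k = u_{k+1} + c` backwards from `u_{K+1} = 0`. -/
def backwardProfile (β a c : ℝ) : ℕ → ℝ
  | 0 => 0
  | n + 1 => joinRateInv β ((backwardProfile β a c n + c) / a)

section BackwardProfile

variable {β a c : ℝ}

lemma backwardProfile_nonneg (hβ1 : β ≤ 1) (n : ℕ) : 0 ≤ backwardProfile β a c n := by
  cases n
  · exact le_rfl
  · exact joinRateInv_nonneg hβ1 _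

lemma backwardProfile_zero_right (n : ℕ) : backwardProfile β a 0 n = 0 := by
  induction n with
  | zero => rfl
  | succ n ih => simp [backwardProfile, ih]

lemma joinRate_backwardProfile_succ (hβ : β ∈ Set.Icc 0 1) (ha : 0 < a) (hc : 0 ≤ c)
    (n : ℕ) :
    a * joinRate β (backwardProfile β a c (n + 1)) = backwardProfile β a c n + c := by
  rw [backwardProfile, joinRate_joinRateInv hβ
    (div_nonneg (add_nonneg (backwardProfile_nonneg hβ.2 n) hc) ha.le)]
  field_simp

lemma monotone_backwardProfile (hβ : β ∈ Set.Icc 0 1) (ha : 0 ≤ a) :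
    Monotone (backwardProfile β a c) := by
  refine monotone_nat_of_le_succ fun n => ?_
  induction n with
  | zero => exact joinRateInv_nonneg hβ.2 _
  | succ n ih =>
    exact monotone_joinRateInv hβ (div_le_div_of_nonneg_right (by linarith) ha)

lemma monotone_backwardProfile_right (hβ : β ∈ Set.Icc 0 1) (ha : 0 ≤ a) (n : ℕ) :
    Monotone fun c => backwardProfile β a c n := by
  induction n with
  | zero => exact monotone_const
  | succ n ih =>
    exact fun c c' hcc => monotone_joinRateInv hβ
      (div_le_div_of_nonneg_right (add_le_add (ih hcc) hcc) ha)

lemma strictMonoOn_backwardProfile_succ (hβ : β ∈ Set.Icc 0 1) (ha : 0 < a) (n : ℕ) :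
    StrictMonoOn (fun c => backwardProfile β a c (n + 1)) (Set.Ici 0) := by
  intro c hc c' hc' hcc
  refine strictMonoOn_joinRateInv hβ
    (div_nonneg (add_nonneg (backwardProfile_nonneg hβ.2 n) hc) ha.le)
    (div_nonneg (add_nonneg (backwardProfile_nonneg hβ.2 n) hc') ha.le)
    (div_lt_div_of_pos_right ?_ ha)
  exact add_lt_add_of_le_of_lt (monotone_backwardProfile_right hβ ha.le n hcc.le) hcc

lemma continuousAt_backwardProfile (hβ : β ∈ Set.Icc 0 1) (ha : a ≠ 0) (n : ℕ) :
    ContinuousAt (fun p : ℝ × ℝ => backwardProfile β p.1 p.2 n) (a, c) := by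
  induction n with
  | zero => exact continuousAt_const
  | succ n ih =>
    exact (continuous_joinRateInv hβ).continuousAt.comp
      ((ih.add continuousAt_snd).div continuousAt_fst ha)

end BackwardProfile

open Classical in
/-- The shooting parameter `c = a * joinRate β u_K`: the `c ≥ 0` for which the backward solution
reaches `u_0 = 1`, which exists and is unique when `a > 0`. -/
def shootingConstant (β : ℝ) (K : ℕ) (a : ℝ) : ℝ :=
  if h : ∃ c, 0 ≤ c ∧ backwardProfile β a c (K + 1) = 1 then h.choose else 0

section ShootingConstant

variable {β a : ℝ} {K : ℕ}

lemma exists_backwardProfile_eq_one (hβ : β ∈ Set.Icc 0 1) (ha : 0 < a) :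
    ∃ c, 0 ≤ c ∧ backwardProfile β a c (K + 1) = 1 := by
  have hcont : ContinuousOn (fun c => backwardProfile β a c (K + 1)) (Set.Icc 0 a) :=
    fun c _ => ((continuousAt_backwardProfile hβ ha.ne' (K + 1)).comp
      (continuousAt_const.prodMk continuousAt_id)).continuousWithinAt
  have hle : 1 ≤ backwardProfile β a a (K + 1) := by
    calc (1 : ℝ) = backwardProfile β a a 1 := by
          simp [backwardProfile, div_self ha.ne', joinRateInv_one hβ]
      _ ≤ backwardProfile β a a (K + 1) := monotone_backwardProfile hβ ha.le (by omega)
  obtain ⟨c, hc, hc1⟩ := intermediate_value_Icc ha.le hcont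
    ⟨by simp [backwardProfile_zero_right], hle⟩
  exact ⟨c, hc.1, hc1⟩

lemma shootingConstant_spec (hβ : β ∈ Set.Icc 0 1) (ha : 0 < a) :
    0 ≤ shootingConstant β K a ∧ backwardProfile β a (shootingConstant β K a) (K + 1) = 1 := by
  rw [shootingConstant, dif_pos (exists_backwardProfile_eq_one hβ ha)]
  exact (exists_backwardProfile_eq_one hβ ha).choose_spec

lemma eq_shootingConstant (hβ : β ∈ Set.Icc 0 1) (ha : 0 < a) {c : ℝ} (hc : 0 ≤ c)
    (h1 : backwardProfile β a c (K + 1) = 1) : c = shootingConstant β K a := by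
  obtain ⟨hc₀, h₀⟩ := shootingConstant_spec (K := K) hβ ha
  exact (strictMonoOn_backwardProfile_succ hβ ha K).injOn hc hc₀ (h1.trans h₀.symm)

lemma shootingConstant_pos (hβ : β ∈ Set.Icc 0 1) (ha : 0 < a) :
    0 < shootingConstant β K a := by
  obtain ⟨hc, h1⟩ := shootingConstant_spec (K := K) hβ ha
  refine hc.lt_of_ne fun h => ?_
  rw [← h, backwardProfile_zero_right] at h1
  exact zero_ne_one h1

lemma continuousAt_shootingConstant (hβ : β ∈ Set.Icc 0 1) (ha : 0 < a) :
    ContinuousAt (shootingConstant β K) a := by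
  have hpos := shootingConstant_pos (K := K) hβ ha
  have hb : ∀ c, ContinuousAt (fun x => backwardProfile β x c (K + 1)) a := fun c =>
    (continuousAt_backwardProfile (c := c) hβ ha.ne' (K + 1)).comp (f := fun x => (x, c))
      (continuousAt_id.prodMk continuousAt_const)
  have hmono : ∀ {x c c'}, 0 < x → c ≤ c' →
      backwardProfile β x c (K + 1) ≤ backwardProfile β x c' (K + 1) := fun hx hcc =>
    monotone_backwardProfile_right hβ hx.le (K + 1) hcc
  obtain ⟨hc₀, h₀⟩ := shootingConstant_spec (K := K) hβ ha
  refine tendsto_order.2 ⟨fun l hl => ?_, fun r hr => ?_⟩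
  · have hl' : backwardProfile β a (max l 0) (K + 1) < 1 := h₀ ▸
      strictMonoOn_backwardProfile_succ hβ ha K (le_max_right l 0) hc₀ (max_lt hl hpos)
    filter_upwards [(hb _).eventually_lt_const hl', eventually_gt_nhds ha] with x hx hxpos
    by_contra! h
    have := hmono hxpos (h.trans (le_max_left l 0))
    linarith [(shootingConstant_spec (K := K) hβ hxpos).2]
  · have hr' : 1 < backwardProfile β a r (K + 1) := h₀ ▸
      strictMonoOn_backwardProfile_succ hβ ha K hc₀ (hc₀.trans hr.le) hr
    filter_upwards [(hb _).eventually_const_lt hr', eventually_gt_nhds ha] with x hx hxpos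
    by_contra! h
    have := hmono hxpos h
    linarith [(shootingConstant_spec (K := K) hβ hxpos).2]

end ShootingConstant

def equilibriumProfile (β : ℝ) (K : ℕ) (a : ℝ) (k : ℕ) : ℝ :=
  backwardProfile β a (shootingConstant β K a) (K + 1 - k)

section EquilibriumProfile

variable {β a : ℝ} {K : ℕ}

lemma equilibriumProfile_zero (hβ : β ∈ Set.Icc 0 1) (ha : 0 < a) :
    equilibriumProfile β K a 0 = 1 :=
  (shootingConstant_spec hβ ha).2

lemma equilibriumProfile_of_lt {k : ℕ} (hk : K < k) : equilibriumProfile β K a k = 0 := by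
  rw [equilibriumProfile, Nat.sub_eq_zero_of_le hk]
  rfl

lemma equilibriumProfile_nonneg (hβ1 : β ≤ 1) (k : ℕ) : 0 ≤ equilibriumProfile β K a k :=
  backwardProfile_nonneg hβ1 _

lemma antitone_equilibriumProfile (hβ : β ∈ Set.Icc 0 1) (ha : 0 ≤ a) :
    Antitone (equilibriumProfile β K a) := fun _ _ hkl =>
  monotone_backwardProfile hβ ha (Nat.sub_le_sub_left hkl _)

lemma mul_joinRate_equilibriumProfile (hβ : β ∈ Set.Icc 0 1) (ha : 0 < a) {k : ℕ}
    (hk : k ≤ K) :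
    a * joinRate β (equilibriumProfile β K a k) =
      equilibriumProfile β K a (k + 1) + shootingConstant β K a := by
  have hidx : K + 1 - k = K - k + 1 := by omega
  rw [equilibriumProfile, equilibriumProfile, hidx, Nat.add_sub_add_right,
    joinRate_backwardProfile_succ hβ ha (shootingConstant_spec hβ ha).1]

lemma extProfile_equilibriumProfile :
    extProfile K (fun k => equilibriumProfile β K a k) = equilibriumProfile β K a := by
  funext k
  rw [extProfile]
  split_ifs with hk
  · rfl
  · exact (equilibriumProfile_of_lt (by omega)).symm

lemma isIncentiveProfile_equilibriumProfile (hβ : β ∈ Set.Icc 0 1) (ha : 0 < a) :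
    IsIncentiveProfile a β K (fun k => equilibriumProfile β K a k) := by
  rw [IsIncentiveProfile, extProfile_equilibriumProfile]
  refine ⟨equilibriumProfile_zero hβ ha, fun k _ => antitone_equilibriumProfile hβ ha.le
    k.le_succ, equilibriumProfile_nonneg hβ.2 K, fun k hk1 hkK => ?_⟩
  obtain ⟨j, rfl⟩ := Nat.exists_eq_add_of_le' hk1
  rw [Nat.add_sub_cancel, ← joinRate_sub, mul_sub, mul_joinRate_equilibriumProfile hβ ha
    (by omega), mul_joinRate_equilibriumProfile hβ ha hkK]
  ring

end EquilibriumProfile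

lemma sub_eq_of_sub_succ_eq {G : Type*} [AddGroup G] {x y : ℕ → G} {K : ℕ} (hx : x (K + 1) = 0)
    (h : ∀ j < K, y j - y (j + 1) = x (j + 1) - x (j + 2)) {j : ℕ} (hj : j ≤ K) :
    y j - y K = x (j + 1) := by
  induction hj using Nat.decreasingInduction with
  | self => rw [sub_self, hx]
  | of_succ j hj ih => rw [← sub_add_sub_cancel _ (y (j + 1)), h j hj, ih, sub_add_cancel]

lemma eq_backwardProfile {β a c : ℝ} {K : ℕ} {e : ℕ → ℝ} (hβ : β ∈ Set.Icc 0 1) (ha : 0 < a)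
    (he : ∀ j, 0 ≤ e j) (htop : e (K + 1) = 0)
    (hrel : ∀ j ≤ K, a * joinRate β (e j) = e (j + 1) + c) {n : ℕ} (hn : n ≤ K + 1) :
    e (K + 1 - n) = backwardProfile β a c n := by
  induction n with
  | zero => simpa [backwardProfile] using htop
  | succ n ih =>
    have hj : K + 1 - (n + 1) + 1 = K + 1 - n := by omega
    rw [backwardProfile, ← ih (by omega), ← hj, ← hrel _ (by omega),
      mul_div_cancel_left₀ _ ha.ne', joinRateInv_joinRate hβ (he _)]

namespace IsIncentiveProfile

variable {β a : ℝ} {K : ℕ} {v : Fin (K + 1) → ℝ}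

lemma extProfile_eq (hv : IsIncentiveProfile a β K v) (hβ : β ∈ Set.Icc 0 1) (ha : 0 < a) :
    extProfile K v = equilibriumProfile β K a := by
  obtain ⟨h0, hmono, hKnn, hbal⟩ := hv
  set e := extProfile K v
  have htop : ∀ k, K < k → e k = 0 := fun k hk => dif_neg (by omega)
  have hanti : Antitone e := antitone_nat_of_succ_le fun k => by
    rcases lt_trichotomy k K with hk | rfl | hk
    · exact hmono k hk
    · rw [htop _ k.lt_succ_self]; exact hKnn
    · rw [htop _ hk, htop _ (by omega)]
  have hnn : ∀ k, 0 ≤ e k := fun k => by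
    rcases le_or_gt k K with hk | hk
    · exact hKnn.trans (hanti hk)
    · exact (htop k hk).ge
  have hrel : ∀ j ≤ K, a * joinRate β (e j) = e (j + 1) + a * joinRate β (e K) := by
    intro j hj
    have := sub_eq_of_sub_succ_eq (y := fun j => a * joinRate β (e j))
      (htop _ K.lt_succ_self) (fun j hj => by
        rw [← mul_sub, joinRate_sub]
        exact (hbal (j + 1) (by omega) (by omega)).symm) hj
    linarith
  have hc : 0 ≤ a * joinRate β (e K) := mul_nonneg ha.le (joinRate_nonneg hβ (hnn K))
  have hback := fun n (hn : n ≤ K + 1) =>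
    eq_backwardProfile hβ ha hnn (htop _ K.lt_succ_self) hrel hn
  have hshoot : a * joinRate β (e K) = shootingConstant β K a :=
    eq_shootingConstant hβ ha hc (by simpa [h0] using (hback (K + 1) le_rfl).symm)
  funext k
  rcases le_or_gt k (K + 1) with hk | hk
  · rw [equilibriumProfile, ← hshoot, ← hback _ (Nat.sub_le _ _), Nat.sub_sub_self hk]
  · rw [htop _ (by omega), equilibriumProfile_of_lt (by omega)]

lemma eq_equilibriumProfile (hv : IsIncentiveProfile a β K v) (hβ : β ∈ Set.Icc 0 1)
    (ha : 0 < a) : v = fun k : Fin (K + 1) => equilibriumProfile β K a k := by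
  funext k
  have := congrFun (hv.extProfile_eq hβ ha) k
  rwa [extProfile, dif_pos k.isLt] at this

end IsIncentiveProfile

section LoadDependence

variable {β : ℝ} {K : ℕ}

lemma equilibriumProfile_le (hβ : β ∈ Set.Icc 0 1) {a : ℝ} (ha : 0 < a) {k : ℕ} (hk : 1 ≤ k) :
    equilibriumProfile β K a k ≤ a := by
  have h := mul_joinRate_equilibriumProfile (K := K) hβ ha (Nat.zero_le K)
  rw [equilibriumProfile_zero hβ ha, joinRate_one, mul_one] at h
  calc equilibriumProfile β K a k ≤ equilibriumProfile β K a 1 :=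
        antitone_equilibriumProfile hβ ha.le hk
    _ ≤ a := by linarith [(shootingConstant_spec (K := K) hβ ha).1]

lemma continuousAt_equilibriumProfile (hβ : β ∈ Set.Icc 0 1) {a : ℝ} (ha : 0 < a) (k : ℕ) :
    ContinuousAt (fun x => equilibriumProfile β K x k) a :=
  (continuousAt_backwardProfile hβ ha.ne' _).comp (f := fun x => (x, shootingConstant β K x))
    (continuousAt_id.prodMk (continuousAt_shootingConstant hβ ha))

lemma equilibriumProfile_le_of_threshold_le (hβ : β ∈ Set.Icc 0 1) {a a' : ℝ} (ha : 0 < a)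
    (haa : a ≤ a') {m : ℕ} (hm : m ≤ K + 1)
    (hδ : a * shootingConstant β K a' - a' * shootingConstant β K a ≤
      (a' - a) * equilibriumProfile β K a m) :
    equilibriumProfile β K a m ≤ equilibriumProfile β K a' m := by
  have ha' := ha.trans_le haa
  induction m with
  | zero => exact (equilibriumProfile_zero hβ ha).trans_le (equilibriumProfile_zero hβ ha').ge
  | succ m ih =>
    have hum := ih (by omega) <| hδ.trans <| mul_le_mul_of_nonneg_left
      (antitone_equilibriumProfile hβ ha.le m.le_succ) (sub_nonneg.2 haa)
    have hQ := (strictMonoOn_joinRate hβ).monotoneOn (equilibriumProfile_nonneg hβ.2 m)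
      (equilibriumProfile_nonneg hβ.2 m) hum
    have := mul_joinRate_equilibriumProfile (K := K) hβ ha (k := m) (by omega)
    have := mul_joinRate_equilibriumProfile (K := K) hβ ha' (k := m) (by omega)
    -- `a' (u_{m+1} + c) = a a' Q(u_m) ≤ a a' Q(u'_m) = a (u'_{m+1} + c')`
    nlinarith [mul_le_mul_of_nonneg_left hQ (mul_pos ha ha').le]

lemma equilibriumProfile_le_of_le (hβ : β ∈ Set.Icc 0 1) {a a' : ℝ} (ha : 0 < a)
    (haa : a ≤ a') (k : ℕ) : equilibriumProfile β K a k ≤ equilibriumProfile β K a' k := by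
  have ha' := ha.trans_le haa
  set u := equilibriumProfile β K a
  set u' := equilibriumProfile β K a'
  -- Where `(a' - a) u_j` is above the threshold, `u_j ≤ u'_j` propagates forwards from
  -- `u_0 = u'_0 = 1`; below it, backwards from `u_{K+1} = u'_{K+1} = 0`.
  have backward : ∀ n ≤ K + 1, u (K + 1 - n) ≤ u' (K + 1 - n) := by
    intro n
    induction n with
    | zero =>
      intro _
      simp only [u, u', Nat.sub_zero, equilibriumProfile_of_lt K.lt_succ_self, le_refl]
    | succ n ih =>
      intro hn
      obtain ⟨j, hj, hjn⟩ : ∃ j, K + 1 - (n + 1) = j ∧ K + 1 - n = j + 1 := ⟨_, rfl, by omega⟩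
      rw [hj]
      rw [hjn] at ih
      by_cases hδ : a * shootingConstant β K a' - a' * shootingConstant β K a ≤ (a' - a) * u j
      · exact equilibriumProfile_le_of_threshold_le hβ ha haa (by omega) hδ
      have hδ' := (mul_le_mul_of_nonneg_left (antitone_equilibriumProfile hβ ha.le j.le_succ)
        (sub_nonneg.2 haa)).trans (not_le.1 hδ).le
      have := mul_joinRate_equilibriumProfile (K := K) hβ ha (k := j) (by omega)
      have := mul_joinRate_equilibriumProfile (K := K) hβ ha' (k := j) (by omega)
      refine ((strictMonoOn_joinRate hβ).le_iff_le (equilibriumProfile_nonneg hβ.2 j)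
        (equilibriumProfile_nonneg hβ.2 j)).1 (le_of_mul_le_mul_left ?_ (mul_pos ha ha'))
      nlinarith [ih (by omega)]
  rcases le_or_gt k (K + 1) with hk | hk
  · simpa [Nat.sub_sub_self hk] using backward (K + 1 - k) (by omega)
  · simp only [u, u', equilibriumProfile_of_lt (by omega : K < k), le_refl]

lemma monotoneOn_equilibriumProfile (hβ : β ∈ Set.Icc 0 1) (k : ℕ) :
    MonotoneOn (fun a => equilibriumProfile β K a k) (Set.Ioi 0) :=
  fun _ ha _ _ haa => equilibriumProfile_le_of_le hβ ha haa k

end LoadDependence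

/-- Customers per queue at the equilibrium with parameter `ρ`: `Λ ρ` at the infinite-server
queue, `Σ_{k ≥ 1} u_{i,k}` at each single-server queue of cluster `i`. -/
def customersPerQueue {C : ℕ} (α : Fin C → ℝ) (K : Fin C → ℕ) (r β : Fin C → ℝ) (Λ ρ : ℝ) :
    ℝ :=
  Λ * ρ + ∑ i, α i * ∑ k ∈ Finset.Icc 1 (K i), equilibriumProfile (β i) (K i) (ρ * r i) k

section CustomersPerQueue

variable {C : ℕ} {α : Fin C → ℝ} {K : Fin C → ℕ} {r β : Fin C → ℝ} {Λ : ℝ}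

lemma strictMonoOn_customersPerQueue (hα : ∀ i, 0 ≤ α i) (hr : ∀ i, 0 < r i)
    (hβ : ∀ i, β i ∈ Set.Icc 0 1) (hΛ : 0 < Λ) :
    StrictMonoOn (customersPerQueue α K r β Λ) (Set.Ioi 0) := by
  intro ρ hρ ρ' hρ' hlt
  refine add_lt_add_of_lt_of_le (mul_lt_mul_of_pos_left hlt hΛ) (sum_le_sum fun i _ =>
    mul_le_mul_of_nonneg_left (sum_le_sum fun k _ => ?_) (hα i))
  exact monotoneOn_equilibriumProfile (hβ i) k (mul_pos hρ (hr i)) (mul_pos hρ' (hr i))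
    (mul_le_mul_of_nonneg_right hlt.le (hr i).le)

lemma continuousOn_customersPerQueue (hr : ∀ i, 0 < r i) (hβ : ∀ i, β i ∈ Set.Icc 0 1) :
    ContinuousOn (customersPerQueue α K r β Λ) (Set.Ioi 0) := by
  intro ρ hρ
  have h : ∀ i k, ContinuousAt (fun x => equilibriumProfile (β i) (K i) (x * r i) k) ρ :=
    fun i k => (continuousAt_equilibriumProfile (hβ i) (mul_pos hρ (hr i)) k).comp
      (f := fun x => x * r i) (continuousAt_id.mul continuousAt_const)
  unfold customersPerQueue
  exact ContinuousAt.continuousWithinAt (by fun_prop)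

lemma mul_le_customersPerQueue (hα : ∀ i, 0 ≤ α i) (hβ1 : ∀ i, β i ≤ 1) (ρ : ℝ) :
    Λ * ρ ≤ customersPerQueue α K r β Λ ρ :=
  le_add_of_nonneg_right (sum_nonneg fun i _ => mul_nonneg (hα i)
    (sum_nonneg fun k _ => equilibriumProfile_nonneg (hβ1 i) k))

lemma customersPerQueue_le (hα : ∀ i, 0 ≤ α i) (hr : ∀ i, 0 < r i)
    (hβ : ∀ i, β i ∈ Set.Icc 0 1) {ρ : ℝ} (hρ : 0 < ρ) :
    customersPerQueue α K r β Λ ρ ≤ (Λ + ∑ i, α i * (K i * r i)) * ρ := by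
  have hcluster : ∀ i, ∑ k ∈ Finset.Icc 1 (K i), equilibriumProfile (β i) (K i) (ρ * r i) k ≤
      K i * (ρ * r i) := fun i => by
    simpa using sum_le_sum fun k hk =>
      equilibriumProfile_le (hβ i) (mul_pos hρ (hr i)) (mem_Icc.1 hk).1
  calc customersPerQueue α K r β Λ ρ ≤ Λ * ρ + ∑ i, α i * (K i * (ρ * r i)) :=
        add_le_add_right (sum_le_sum fun i _ => mul_le_mul_of_nonneg_left (hcluster i) (hα i)) _
    _ = (Λ + ∑ i, α i * (K i * r i)) * ρ := by
        rw [add_mul, sum_mul]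
        congr 1
        exact sum_congr rfl fun i _ => by ring

lemma existsUnique_customersPerQueue_eq (hα : ∀ i, 0 ≤ α i) (hr : ∀ i, 0 < r i)
    (hβ : ∀ i, β i ∈ Set.Icc 0 1) (hΛ : 0 < Λ) {s : ℝ} (hs : 0 < s) :
    ∃! ρ, 0 < ρ ∧ customersPerQueue α K r β Λ ρ = s := by
  set M := Λ + ∑ i, α i * (K i * r i)
  have hM : Λ ≤ M := le_add_of_nonneg_right (sum_nonneg fun i _ =>
    mul_nonneg (hα i) (mul_nonneg (Nat.cast_nonneg _) (hr i).le))
  have hρ₀ : 0 < s / M := div_pos hs (hΛ.trans_le hM)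
  have hlow : customersPerQueue α K r β Λ (s / M) ≤ s :=
    (customersPerQueue_le hα hr hβ hρ₀).trans_eq (mul_div_cancel₀ s (hΛ.trans_le hM).ne')
  have hhigh : s ≤ customersPerQueue α K r β Λ (s / Λ) :=
    (mul_div_cancel₀ s hΛ.ne').symm.trans_le (mul_le_customersPerQueue hα (fun i => (hβ i).2) _)
  obtain ⟨ρ, hρ, hFρ⟩ := intermediate_value_Icc (div_le_div_of_nonneg_left hs.le hΛ hM)
    ((continuousOn_customersPerQueue hr hβ).mono fun x hx => hρ₀.trans_le hx.1) ⟨hlow, hhigh⟩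
  exact ⟨ρ, ⟨hρ₀.trans_le hρ.1, hFρ⟩, fun ρ' hρ' => (strictMonoOn_customersPerQueue hα hr hβ
    hΛ).injOn hρ'.1 (hρ₀.trans_le hρ.1) (hρ'.2.trans hFρ.symm)⟩

end CustomersPerQueue

theorem cluster_incentive_equilibrium_exists_unique_general (C : ℕ)
    (α : Fin C → ℝ) (hα : ∀ i, 0 < α i)
    (K : Fin C → ℕ)
    (r : Fin C → ℝ) (hr0 : ∀ i, 0 < r i)
    (β : Fin C → ℝ) (hβ : ∀ i, β i ∈ Set.Icc (0 : ℝ) 1)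
    (Λ s : ℝ) (hΛ : 0 < Λ) (hs : 0 < s) :
    ∃! p : ℝ × (∀ i : Fin C, Fin (K i + 1) → ℝ),
      0 < p.1 ∧ (∀ i, IsIncentiveProfile (p.1 * r i) (β i) (K i) (p.2 i)) ∧
      s = Λ * p.1 + ∑ i, α i * ∑ k ∈ Finset.Icc 1 (K i), extProfile (K i) (p.2 i) k := by
  have hsum : ∀ ρ (v : ∀ i, Fin (K i + 1) → ℝ), 0 < ρ →
      (∀ i, IsIncentiveProfile (ρ * r i) (β i) (K i) (v i)) →
      Λ * ρ + ∑ i, α i * ∑ k ∈ Finset.Icc 1 (K i), extProfile (K i) (v i) k =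
        customersPerQueue α K r β Λ ρ := fun ρ v hρ hv => by
    simp only [customersPerQueue, fun i => (hv i).extProfile_eq (hβ i) (mul_pos hρ (hr0 i))]
  obtain ⟨ρ, ⟨hρ, hFρ⟩, huniq⟩ :=
    existsUnique_customersPerQueue_eq (fun i => (hα i).le) hr0 hβ hΛ hs
  have hprof : ∀ i, IsIncentiveProfile (ρ * r i) (β i) (K i)
      fun k => equilibriumProfile (β i) (K i) (ρ * r i) k := fun i =>
    isIncentiveProfile_equilibriumProfile (hβ i) (mul_pos hρ (hr0 i))
  refine ⟨(ρ, fun i k => equilibriumProfile (β i) (K i) (ρ * r i) k),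
    ⟨hρ, hprof, hFρ.symm.trans (hsum _ _ hρ hprof).symm⟩, ?_⟩
  rintro ⟨ρ', v⟩ ⟨hρ', hv, hs'⟩
  obtain rfl : ρ' = ρ := huniq ρ' ⟨hρ', (hsum ρ' v hρ' hv).symm.trans hs'.symm⟩
  exact Prod.ext rfl (funext fun i => (hv i).eq_equilibriumProfile (hβ i) (mul_pos hρ' (hr0 i)))

/-- unique equilibrium point of the clustered mean-field model with
incentives: a unique pair `(ρ, u)` with `ρ > 0`, each `u_i` an incentive profile for
`(ρ r_i, β_i, K_i)`, and `s = Λρ + Σ_c α_c Σ_{k=1}^{K_c} u_{c,k}`. -/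
theorem cluster_incentive_equilibrium_exists_unique (C : ℕ) (hC : 1 ≤ C)
    (α : Fin C → ℝ) (hα : ∀ i, 0 < α i) (hαsum : ∑ i, α i = 1)
    (K : Fin C → ℕ) (hK : ∀ i, 1 ≤ K i)
    (r : Fin C → ℝ) (hr0 : ∀ i, 0 < r i) (hr1 : ∀ i, r i ≤ 1) (hrmax : ∃ i, r i = 1)
    (β : Fin C → ℝ) (hβ : ∀ i, β i ∈ Set.Icc (0 : ℝ) 1)
    (Λ s : ℝ) (hΛ : 0 < Λ) (hs : 0 < s) :
    ∃! p : ℝ × (∀ i : Fin C, Fin (K i + 1) → ℝ),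
      0 < p.1 ∧ (∀ i, IsIncentiveProfile (p.1 * r i) (β i) (K i) (p.2 i)) ∧
      s = Λ * p.1 + ∑ i, α i * ∑ k ∈ Finset.Icc 1 (K i), extProfile (K i) (p.2 i) k :=
  cluster_incentive_equilibrium_exists_unique_general C α hα K r hr0 β hβ Λ s hΛ hs
end
end

section
/- Let K ≥ 1 be an integer and let 0 < ρ ≤ 1. Then the unique two-choice profile u = ν_{ρ,K} satisfies u_1 ≤ ρ, the quantity ε := ρ − u_1 satisfies 0 ≤ ε ≤ ρ^{2^{K+1} − 1}, and u_k ≤ ρ^{2^k − 1} for every 1 ≤ k ≤ K. -/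
/-! Summing the balance equations `u_k - u_{k+1} = ρ (u_{k-1}² - u_k²)` from `k = j` to `K`
and using `u_{K+1} = 0` gives `u_j = ρ (u_{j-1}² - u_K²) ≤ ρ u_{j-1}²`, so by induction
`u_k ≤ ρ^{2^k - 1}`. For `j = 1` the same identity reads `ρ - u_1 = ρ u_K²`, which lies
between `0` and `ρ (ρ^{2^K - 1})² = ρ^{2^{K+1} - 1}`. -/

open Finset Real

noncomputable section

theorem sub_eq_sub_of_forall_sub_eq_sub {G : Type*} [AddCommGroup G] {f g : ℕ → G} {K j : ℕ}
    (h : ∀ k, 1 ≤ k → k ≤ K → f k - f (k + 1) = g (k - 1) - g k) (hj : 1 ≤ j) (hjK : j ≤ K + 1) :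
    f j - f (K + 1) = g (j - 1) - g K := by
  refine Nat.decreasingInduction' (fun k hk hjk ih => ?_) hjK (by simp)
  rw [← sub_add_sub_cancel _ (f (k + 1)), ih, h k (hj.trans hjk) (by omega), Nat.add_sub_cancel]
  abel

theorem pow_two_pow_succ_sub_one {M : Type*} [Monoid M] (x : M) (k : ℕ) :
    x ^ (2 ^ (k + 1) - 1) = x * (x ^ (2 ^ k - 1)) ^ 2 := by
  rw [← pow_mul, ← pow_succ']
  have : 1 ≤ 2 ^ k := Nat.one_le_two_pow
  congr 1
  rw [pow_succ]
  omega

theorem le_pow_two_pow_sub_one_of_le_mul_sq {w : ℕ → ℝ} {ρ : ℝ} {n : ℕ} (hρ : 0 ≤ ρ)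
    (h0 : w 0 ≤ 1) (hnn : ∀ k < n, 0 ≤ w k) (hstep : ∀ k < n, w (k + 1) ≤ ρ * w k ^ 2) :
    ∀ k ≤ n, w k ≤ ρ ^ (2 ^ k - 1) := by
  intro k hk
  induction k with
  | zero => simpa using h0
  | succ k ih =>
    have hsq : w k ^ 2 ≤ (ρ ^ (2 ^ k - 1)) ^ 2 :=
      pow_le_pow_left₀ (hnn k (by omega)) (ih (by omega)) 2
    calc w (k + 1) ≤ ρ * w k ^ 2 := hstep k (by omega)
      _ ≤ ρ * (ρ ^ (2 ^ k - 1)) ^ 2 := mul_le_mul_of_nonneg_left hsq hρ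
      _ = ρ ^ (2 ^ (k + 1) - 1) := (pow_two_pow_succ_sub_one ρ k).symm

namespace IsTwoChoiceProfile

variable {ρ : ℝ} {K : ℕ} {u : Fin (K + 1) → ℝ}

theorem extProfile_nonneg_s12 (hu : IsTwoChoiceProfile ρ K u) {j : ℕ} (hj : j ≤ K) :
    0 ≤ extProfile K u j := by
  induction hj using Nat.decreasingInduction with
  | self => exact hu.2.2.1
  | of_succ k hk ih => exact ih.trans (hu.2.1 k hk)

theorem extProfile_eq (hu : IsTwoChoiceProfile ρ K u) {j : ℕ} (hj : 1 ≤ j) (hjK : j ≤ K + 1) :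
    extProfile K u j = ρ * (extProfile K u (j - 1) ^ 2 - extProfile K u K ^ 2) := by
  have hzero : extProfile K u (K + 1) = 0 := by simp [extProfile]
  have h := sub_eq_sub_of_forall_sub_eq_sub (g := fun k => ρ * extProfile K u k ^ 2)
    (fun k hk hkK => (hu.2.2.2 k hk hkK).trans (mul_sub _ _ _)) hj hjK
  rw [hzero, sub_zero] at h
  rw [h, mul_sub]

theorem extProfile_one (hu : IsTwoChoiceProfile ρ K u) :
    extProfile K u 1 = ρ * (1 - extProfile K u K ^ 2) := by
  rw [hu.extProfile_eq le_rfl (by omega), Nat.sub_self, hu.1, one_pow]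

theorem extProfile_le_pow (hu : IsTwoChoiceProfile ρ K u) (hρ : 0 ≤ ρ) {k : ℕ} (hk : k ≤ K) :
    extProfile K u k ≤ ρ ^ (2 ^ k - 1) := by
  refine le_pow_two_pow_sub_one_of_le_mul_sq hρ hu.1.le
    (fun j hj => hu.extProfile_nonneg_s12 hj.le) (fun j hj => ?_) k hk
  rw [hu.extProfile_eq (by omega) (by omega), Nat.add_sub_cancel]
  nlinarith [mul_nonneg hρ (sq_nonneg (extProfile K u K))]

end IsTwoChoiceProfile

theorem profile_upper_bounds_general (K : ℕ) (ρ : ℝ)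
    (hρ0 : 0 < ρ)
    (u : Fin (K + 1) → ℝ) (hu : IsTwoChoiceProfile ρ K u) :
    extProfile K u 1 ≤ ρ ∧
    0 ≤ ρ - extProfile K u 1 ∧
    ρ - extProfile K u 1 ≤ ρ ^ (2 ^ (K + 1) - 1) ∧
    ∀ k, 1 ≤ k → k ≤ K → extProfile K u k ≤ ρ ^ (2 ^ k - 1) := by
  have hε : ρ - extProfile K u 1 = ρ * extProfile K u K ^ 2 := by
    rw [hu.extProfile_one]
    ring
  have hε_nonneg : 0 ≤ ρ * extProfile K u K ^ 2 := by positivity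
  have huK_sq : extProfile K u K ^ 2 ≤ (ρ ^ (2 ^ K - 1)) ^ 2 :=
    pow_le_pow_left₀ (hu.extProfile_nonneg_s12 le_rfl) (hu.extProfile_le_pow hρ0.le le_rfl) 2
  refine ⟨by linarith, hε ▸ hε_nonneg, ?_, fun k _ hk => hu.extProfile_le_pow hρ0.le hk⟩
  rw [hε, pow_two_pow_succ_sub_one]
  exact mul_le_mul_of_nonneg_left huK_sq hρ0.le

/-- for `0 < ρ ≤ 1`, the unique two-choice profile `u = ν_{ρ,K}` satisfies
`u_1 ≤ ρ`, `0 ≤ ε := ρ − u_1 ≤ ρ^{2^{K+1} − 1}`, and `u_k ≤ ρ^{2^k − 1}` for `1 ≤ k ≤ K`. -/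
theorem profile_upper_bounds (K : ℕ) (hK : 1 ≤ K) (ρ : ℝ)
    (hρ0 : 0 < ρ) (hρ1 : ρ ≤ 1)
    (u : Fin (K + 1) → ℝ) (hu : IsTwoChoiceProfile ρ K u) :
    extProfile K u 1 ≤ ρ ∧
    0 ≤ ρ - extProfile K u 1 ∧
    ρ - extProfile K u 1 ≤ ρ ^ (2 ^ (K + 1) - 1) ∧
    ∀ k, 1 ≤ k → k ≤ K → extProfile K u k ≤ ρ ^ (2 ^ k - 1) :=
  profile_upper_bounds_general K ρ hρ0 u hu
end
end
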